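/- Let t₁, t₂, t₃ ∈ ℝ² be non-collinear tower positions with calibrated source intensities s_c⁽ⁱ⁾ > 0, let Θ ⊆ ℝ² be a set of admissible displacements, and let ι ∈ ℝ² be the receiver's current position estimate. Suppose the producer chooses u ∈ Θ and spoofs the tower intensities so that the receiver's observation y satisfies h(ι + u) = y, where h(x)ᵢ = s_c⁽ⁱ⁾/(1 + ‖x − tᵢ‖²). Then the advanced receiver's updated information state h⁻¹(y) ∩ {ι + θ : θ ∈ Θ} equals the singleton {ι + u}; in particular it is nonempty (plausible). -/

import Mathlib

/-! A point of a real inner product space is determined by its distances to a family of points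
whose affine span is the whole space: two points equidistant from `p i` and `p j` differ by a
vector orthogonal to `p j - p i`, hence to the whole space. Three affinely independent points
span the plane, and `r ↦ s / (1 + r²)` is injective on `r ≥ 0`, so the sensor map `h` is
injective. The updated information state is then the fibre of `h` over `h (ι + u)`, the singleton
`{ι + u}`, which meets the motion-model set `ι + Θ` because `u ∈ Θ`. -/

open EuclideanGeometry

theorem eq_of_forall_dist_eq_of_affineSpan_eq_top {V P ι : Type*} [NormedAddCommGroup V]
    [InnerProductSpace ℝ V] [MetricSpace P] [NormedAddTorsor V P] {p : ι → P}
    (hp : affineSpan ℝ (Set.range p) = ⊤) {x x' : P}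
    (hdist : ∀ i, dist x (p i) = dist x' (p i)) : x = x' := by
  have hortho : (ℝ ∙ (x' -ᵥ x)) ⟂ vectorSpan ℝ (Set.range p) := by
    rw [vectorSpan_def, Submodule.isOrtho_span]
    rintro v rfl _ ⟨_, ⟨i, rfl⟩, _, ⟨j, rfl⟩, rfl⟩
    rw [real_inner_comm]
    exact inner_vsub_vsub_of_dist_eq_of_dist_eq (hdist j) (hdist i)
  rw [AffineSubspace.vectorSpan_eq_top_of_affineSpan_eq_top ℝ V P hp, Submodule.isOrtho_top_right,
    Submodule.span_singleton_eq_bot, vsub_eq_zero_iff_eq] at hortho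
  exact hortho.symm

theorem affineSpan_eq_top_of_affineIndependent_fin_three {t : Fin 3 → EuclideanSpace ℝ (Fin 2)}
    (ht : AffineIndependent ℝ t) : affineSpan ℝ (Set.range t) = ⊤ := by
  rw [ht.affineSpan_eq_top_iff_card_eq_finrank_add_one]
  simp [finrank_euclideanSpace]

theorem eq_of_div_one_add_sq_eq {s a b : ℝ} (hs : s ≠ 0) (ha : 0 ≤ a) (hb : 0 ≤ b)
    (h : s / (1 + a ^ 2) = s / (1 + b ^ 2)) : a = b := by
  rw [div_eq_div_iff (by positivity) (by positivity), mul_right_inj' hs] at h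
  exact (pow_left_inj₀ hb ha two_ne_zero).mp (by linarith) |>.symm

theorem Function.Injective.preimage_singleton_inter_eq {α β : Type*} {f : α → β}
    (hf : Function.Injective f) {a : α} {S : Set α} (ha : a ∈ S) :
    f ⁻¹' {f a} ∩ S = {a} := by
  rw [← Set.image_singleton, hf.preimage_image, Set.singleton_inter_of_mem ha]

/-- For non-collinear towers with calibrated intensities `s_c i > 0`, an
admissible displacement set `Θ`, a current estimate `ι`, and a producer choice `u ∈ Θ`
spoofing the intensities so the receiver observes `y = h (ι + u)` (with
`h(x) i = s_c i / (1 + ‖x - t i‖²)`), the advanced receiver's updated information state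
`h⁻¹(y) ∩ {ι + θ : θ ∈ Θ}` equals `{ι + u}`; in particular it is nonempty (plausible). -/
theorem advanced_receiver_update_singleton
    (t : Fin 3 → EuclideanSpace ℝ (Fin 2)) (ht : AffineIndependent ℝ t)
    (s_c : Fin 3 → ℝ) (hs : ∀ i, 0 < s_c i)
    (Θ : Set (EuclideanSpace ℝ (Fin 2)))
    (ι u : EuclideanSpace ℝ (Fin 2)) (hu : u ∈ Θ)
    (h : EuclideanSpace ℝ (Fin 2) → Fin 3 → ℝ)
    (hdef : ∀ x i, h x i = s_c i / (1 + ‖x - t i‖ ^ 2))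
    (y : Fin 3 → ℝ) (hy : h (ι + u) = y) :
    h ⁻¹' {y} ∩ {z | ∃ θ ∈ Θ, z = ι + θ} = {ι + u} ∧
    (h ⁻¹' {y} ∩ {z | ∃ θ ∈ Θ, z = ι + θ}).Nonempty := by
  subst hy
  have hinj : Function.Injective h := fun x x' hxx =>
    eq_of_forall_dist_eq_of_affineSpan_eq_top (affineSpan_eq_top_of_affineIndependent_fin_three ht)
      fun i => by
        have hi := congrFun hxx i
        rw [hdef, hdef, ← dist_eq_norm, ← dist_eq_norm] at hi
        exact eq_of_div_one_add_sq_eq (hs i).ne' dist_nonneg dist_nonneg hi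
  have hstate := hinj.preimage_singleton_inter_eq (S := {z | ∃ θ ∈ Θ, z = ι + θ}) ⟨u, hu, rfl⟩
  exact ⟨hstate, hstate ▸ Set.singleton_nonempty _⟩
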